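/- In the chain SCM X₁ → Y → X₂ with Y = X₁ + U_Y, X₂ = α₂Y + U₂, var(X₁) = var(U_Y) = 1/ε, var(U₂) = ε⁴, α₂ = ε, quadratic cost a₁² + a₂² ≤ 1: any linear mechanism w with MSE o(ε) satisfies |w₂α₂ - 1| = o(ε) and |w₁ + α₂w₂ - 1| = o(ε), hence w₂ = 1/ε + o(1), w₁ = o(ε), and the improvement (w₁+α₂w₂)/sqrt((w₁+α₂w₂)²+w₂²) is O(ε), while the optimal improvement is 1. -/

import Mathlib

/-!
The three terms of the MSE are nonnegative, so each of them is `o(ε)`, and a term `c² / ε = o(ε)`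
forces `c = o(ε)`. Hence `w₂ ε → 1` and `w₁ + ε w₂ → 1`; since the improvement `a / √(a² + b²)`
is at most `|a / b|`, it is bounded by `|w₁ + ε w₂| / |w₂| = O(ε)`.
-/

open Asymptotics Filter Topology

namespace Real

theorem div_sqrt_sq_add_sq_le_one (a b : ℝ) : a / √(a ^ 2 + b ^ 2) ≤ 1 :=
  div_le_one_of_le₀ ((le_abs_self a).trans (abs_le_sqrt (by nlinarith))) (sqrt_nonneg _)

theorem abs_div_sqrt_sq_add_sq_le {a b : ℝ} (hb : b ≠ 0) :
    |a / √(a ^ 2 + b ^ 2)| ≤ |a / b| := by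
  have hb_le : |b| ≤ √(a ^ 2 + b ^ 2) := abs_le_sqrt (by nlinarith)
  rw [abs_div, abs_div, abs_of_nonneg (sqrt_nonneg _)]
  exact div_le_div_of_nonneg_left (abs_nonneg a) (abs_pos.mpr hb) hb_le

end Real

namespace Asymptotics

variable {α : Type*} {l : Filter α}

theorem IsLittleO.of_add_of_nonneg_left {f g k : α → ℝ} (hf : 0 ≤ᶠ[l] f) (hg : 0 ≤ᶠ[l] g)
    (h : (fun x => f x + g x) =o[l] k) : f =o[l] k := by
  refine (IsBigO.of_bound' ?_).trans_isLittleO h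
  filter_upwards [hf, hg] with x hfx hgx
  simp only [Real.norm_eq_abs, abs_of_nonneg hfx, abs_of_nonneg (add_nonneg hfx hgx)]
  exact le_add_of_nonneg_right hgx

theorem IsLittleO.of_add_of_nonneg_right {f g k : α → ℝ} (hf : 0 ≤ᶠ[l] f) (hg : 0 ≤ᶠ[l] g)
    (h : (fun x => f x + g x) =o[l] k) : g =o[l] k :=
  IsLittleO.of_add_of_nonneg_left hg hf (by simpa only [add_comm] using h)

theorem IsLittleO.of_sq_mul_one_div {f g : α → ℝ} (hg : ∀ᶠ x in l, g x ≠ 0)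
    (h : (fun x => f x ^ 2 * (1 / g x)) =o[l] g) : f =o[l] g := by
  have hsq : (f ^ 2) =o[l] (g ^ 2) := by
    refine (h.mul_isBigO (isBigO_refl g l)).congr' ?_ ?_
    · filter_upwards [hg] with x hx
      simp only [Pi.pow_apply]
      field_simp
    · exact Eventually.of_forall fun x => (sq (g x)).symm
  exact hsq.of_pow two_ne_zero

theorem isBigO_div_sqrt_sq_add_sq {a b : α → ℝ} (hb : ∀ᶠ x in l, b x ≠ 0) :
    (fun x => a x / √(a x ^ 2 + b x ^ 2)) =O[l] fun x => a x / b x :=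
  IsBigO.of_bound' (hb.mono fun _ hx => Real.abs_div_sqrt_sq_add_sq_le hx)

end Asymptotics

/-- Tradeoff with a weak proxy (`α₂ = ε`, `var(X₁) = var(U_Y) = 1/ε`, `var(U₂) = ε⁴`):
any mechanism family with MSE `o(ε)` has `w₂α₂ - 1 = o(ε)`, `w₁ + α₂w₂ - 1 = o(ε)`,
hence `w₂ = 1/ε + o(1)`, `w₁ = o(ε)`, and improvement `O(ε)`, while the optimal
improvement is `1`. -/
theorem stmt8 (w1 w2 : ℝ → ℝ)
    (h : (fun ε => (w1 ε + ε * w2 ε - 1) ^ 2 * (1 / ε)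
        + (w2 ε * ε - 1) ^ 2 * (1 / ε) + (w2 ε) ^ 2 * ε ^ 4)
      =o[nhdsWithin 0 (Set.Ioi 0)] fun ε => ε) :
    ((fun ε => w2 ε * ε - 1) =o[nhdsWithin 0 (Set.Ioi 0)] fun ε => ε) ∧
    ((fun ε => w1 ε + ε * w2 ε - 1) =o[nhdsWithin 0 (Set.Ioi 0)] fun ε => ε) ∧
    ((fun ε => w2 ε - 1 / ε) =o[nhdsWithin 0 (Set.Ioi 0)] fun _ => (1 : ℝ)) ∧
    ((fun ε => w1 ε) =o[nhdsWithin 0 (Set.Ioi 0)] fun ε => ε) ∧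
    ((fun ε => (w1 ε + ε * w2 ε) / Real.sqrt ((w1 ε + ε * w2 ε) ^ 2 + (w2 ε) ^ 2))
        =O[nhdsWithin 0 (Set.Ioi 0)] fun ε => ε) ∧
    ((∀ a b : ℝ, a / Real.sqrt (a ^ 2 + b ^ 2) ≤ 1) ∧
      (1 : ℝ) / Real.sqrt (1 ^ 2 + 0 ^ 2) = 1) := by
  set l := 𝓝[>] (0 : ℝ)
  have hpos : ∀ᶠ ε in l, 0 < ε := self_mem_nhdsWithin
  have hne : ∀ᶠ ε in l, ε ≠ 0 := hpos.mono fun _ => ne_of_gt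
  have hnonneg (c : ℝ → ℝ) : 0 ≤ᶠ[l] fun ε => c ε ^ 2 * (1 / ε) :=
    hpos.mono fun ε hε => by positivity
  have hbias : (fun ε => (w1 ε + ε * w2 ε - 1) ^ 2 * (1 / ε) + (w2 ε * ε - 1) ^ 2 * (1 / ε))
      =o[l] fun ε => ε :=
    h.of_add_of_nonneg_left (hpos.mono fun ε hε => by positivity)
      (hpos.mono fun ε hε => by positivity)
  have hA : (fun ε => w1 ε + ε * w2 ε - 1) =o[l] fun ε => ε :=
    (hbias.of_add_of_nonneg_left (hnonneg _) (hnonneg _)).of_sq_mul_one_div hne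
  have hB : (fun ε => w2 ε * ε - 1) =o[l] fun ε => ε :=
    (hbias.of_add_of_nonneg_right (hnonneg _) (hnonneg _)).of_sq_mul_one_div hne
  have hε_lim : Tendsto (fun ε : ℝ => ε) l (𝓝 0) := tendsto_nhdsWithin_of_tendsto_nhds tendsto_id
  have hA_lim : Tendsto (fun ε => w1 ε + ε * w2 ε) l (𝓝 1) := by
    simpa using (hA.trans_tendsto hε_lim).add_const 1
  have hB_lim : Tendsto (fun ε => w2 ε * ε) l (𝓝 1) := by
    simpa using (hB.trans_tendsto hε_lim).add_const 1
  have hw2 : ∀ᶠ ε in l, w2 ε ≠ 0 :=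
    (hB_lim.eventually_ne one_ne_zero).mono fun _ h => left_ne_zero_of_mul h
  refine ⟨hB, hA, ?_, (hA.sub hB).congr_left fun ε => by ring, ?_,
    Real.div_sqrt_sq_add_sq_le_one, by norm_num⟩
  · refine (hB.mul_isBigO (isBigO_refl (fun ε => 1 / ε) l)).congr' ?_ ?_ <;>
      filter_upwards [hne] with ε hε <;> field_simp
  · refine (isBigO_div_sqrt_sq_add_sq hw2).trans ?_
    -- `(w₁ + ε w₂) / w₂ = ((w₁ + ε w₂) / (w₂ ε)) * ε`, and the first factor tends to `1`
    have hratio := (hA_lim.div hB_lim one_ne_zero).isBigO_one ℝ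
    refine (hratio.mul (isBigO_refl (fun ε : ℝ => ε) l)).congr' ?_ ?_
    · filter_upwards [hne, hw2] with ε hε hw2ε
      simp only [Pi.div_apply]
      field_simp
    · exact Eventually.of_forall fun ε => one_mul ε
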